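/- arXiv:2307.12806 — 3 statements merged into one kernel-verified Lean document; each statement's English description precedes it below -/
import Mathlib

section
/- Assume (H1)–(H3). Let (ν,α,ω,x) be an auxiliary process, and define the ℝᵐ-valued measure μ(dt) := ω(t) ν(dt) / (1 + Σ_{i=1}^n |Σ_{j=1}^m g_{ij}(t,α(t)) ω^j(t)|). Then μ(B) ∈ 𝒦 for every Borel B ⊆ [0,T], μ ≪ ν, the function t ↦ G(t,α(t)) is μ-integrable with ∫_B G(t,α(t)) μ(dt) = ∫_B 𝔤(t,α(t),ω(t)) ν(dt) for every Borel B, so that (μ,α,x) is an impulsive process; and if ν is absolutely continuous w.r.t. Lebesgue measure then so is μ. -/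
open MeasureTheory Set Filter Topology

noncomputable section

/-- ℝⁿ with the Euclidean norm. -/
abbrev Ev (n : ℕ) := EuclideanSpace ℝ (Fin n)

/-- `(ℝⁿ)^{N+1}` with the Euclidean norm: the space of histories `{x(t-h_k)}`. -/
abbrev Hist (n N : ℕ) := PiLp 2 (fun _ : Fin (N + 1) => Ev n)

/-- The Lebesgue σ-algebra on ℝ (Carathéodory sets of the Lebesgue outer measure). -/
def LebSA : MeasurableSpace ℝ := (volume : Measure ℝ).toOuterMeasure.caratheodory

/-- The Lebesgue × Borel product σ-algebra on ℝ × ℝ^q. -/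
def LBprod (q : ℕ) : MeasurableSpace (ℝ × (Fin q → ℝ)) := LebSA.prod inferInstance

/-- The history `{x(t-h_k)} = (x(t-h₀),…,x(t-h_N))`. -/
def histOf {n N : ℕ} (hdel : Fin (N + 1) → ℝ) (x : ℝ → Ev n) (t : ℝ) : Hist n N :=
  WithLp.toLp 2 (fun k => x (t - hdel k))

/-- Total-variation measure `|μ| = Σ_j (μ^j₊ + μ^j₋)` of an ℝᵐ-valued measure. -/
def tvm {m : ℕ} (μ : Fin m → SignedMeasure ℝ) : Measure ℝ := ∑ j, (μ j).totalVariation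

/-- The Radon–Nikodym derivative `ω = dμ/d|μ|`. -/
def rnd {m : ℕ} (μ : Fin m → SignedMeasure ℝ) (t : ℝ) : Fin m → ℝ :=
  fun j => SignedMeasure.rnDeriv (μ j) (tvm μ) t

/-- A matrix-valued function Ψ is μ-integrable if `t ↦ Ψ(t)·ω(t)` is `|μ|`-integrable on [0,T]. -/
def MuIntegrable (T : ℝ) {n m : ℕ} (μ : Fin m → SignedMeasure ℝ)
    (Ψ : ℝ → Matrix (Fin n) (Fin m) ℝ) : Prop :=
  IntegrableOn (fun t => ((Ψ t).mulVec (rnd μ t) : Fin n → ℝ)) (Icc 0 T) (tvm μ)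

/-- `∫_B Ψ dμ := ∫_B Ψ(t)·ω(t) |μ|(dt)`. -/
def muInt {n m : ℕ} (μ : Fin m → SignedMeasure ℝ)
    (Ψ : ℝ → Matrix (Fin n) (Fin m) ℝ) (B : Set ℝ) : Ev n :=
  (WithLp.equiv 2 (Fin n → ℝ)).symm (fun i => ∫ t in B, ((Ψ t).mulVec (rnd μ t)) i ∂(tvm μ))

/-- An impulsive control `(μ,α)`: μ is an ℝᵐ-valued measure on [0,T] with values in the
cone 𝒦, α is Borel measurable with `α(t) ∈ A(t)` Lebesgue-a.e. on [0,T] and |μ|-a.e.,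
and `t ↦ G(t,α(t))` is μ-integrable. -/
structure IsImpulsiveControl (T : ℝ) {n m q : ℕ} (K : Set (Fin m → ℝ))
    (A : ℝ → Set (Fin q → ℝ)) (G : ℝ → (Fin q → ℝ) → Matrix (Fin n) (Fin m) ℝ)
    (μ : Fin m → SignedMeasure ℝ) (α : ℝ → Fin q → ℝ) : Prop where
  supported : ∀ j B, MeasurableSet B → Disjoint B (Icc 0 T) → μ j B = 0
  cone : ∀ B, MeasurableSet B → (fun j => μ j B) ∈ K
  meas : Measurable α
  mem_ae : ∀ᵐ t ∂(volume.restrict (Icc 0 T)), α t ∈ A t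
  mem_tv : ∀ᵐ t ∂(tvm μ), α t ∈ A t
  integ : MuIntegrable T μ (fun t => G t (α t))

/-- A trajectory associated with `(μ,α)`: a bounded-variation function satisfying the
delayed impulsive integral equation on (0,T] and matching the history ζ a.e. on [−h,0). -/
structure IsTrajectory (T h : ℝ) {n m q N : ℕ} (hdel : Fin (N + 1) → ℝ)
    (f : ℝ → Hist n N → (Fin q → ℝ) → Ev n)
    (G : ℝ → (Fin q → ℝ) → Matrix (Fin n) (Fin m) ℝ)
    (ζ : ℝ → Ev n)
    (μ : Fin m → SignedMeasure ℝ) (α : ℝ → Fin q → ℝ) (x : ℝ → Ev n) : Prop where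
  bv : BoundedVariationOn x (Icc 0 T)
  init : ∀ᵐ t ∂(volume.restrict (Ico (-h) 0)), x t = ζ t
  integ : IntegrableOn (fun s => f s (histOf hdel x s) (α s)) (Icc 0 T) volume
  eq : ∀ t ∈ Ioc 0 T, x t = x 0 + (∫ s in (0:ℝ)..t, f s (histOf hdel x s) (α s))
        + muInt μ (fun s => G s (α s)) (Icc 0 t)

/-- The denominator `1 + Σ_i |Σ_j g_{ij}(t,a) w^j|`. -/
def den {n m : ℕ} (M : Matrix (Fin n) (Fin m) ℝ) (w : Fin m → ℝ) : ℝ :=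
  1 + ∑ i, |M.mulVec w i|

/-- The compactified fast dynamics `𝔤(t,a,w) = G(t,a)w / (1+Σ_i|Σ_j g_{ij}(t,a)w^j|)`. -/
def gfrak {n m q : ℕ} (G : ℝ → (Fin q → ℝ) → Matrix (Fin n) (Fin m) ℝ)
    (t : ℝ) (a : Fin q → ℝ) (w : Fin m → ℝ) : Ev n :=
  (den (G t a) w)⁻¹ • (WithLp.equiv 2 (Fin n → ℝ)).symm ((G t a).mulVec w)

/-- The compactified control map `𝔥(t,a,w) = w / (1+Σ_i|Σ_j g_{ij}(t,a)w^j|)`. -/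
def hfrak {n m q : ℕ} (G : ℝ → (Fin q → ℝ) → Matrix (Fin n) (Fin m) ℝ)
    (t : ℝ) (a : Fin q → ℝ) (w : Fin m → ℝ) : Ev m :=
  (den (G t a) w)⁻¹ • (WithLp.equiv 2 (Fin m → ℝ)).symm w

/-- `𝒦̃ = {w ∈ 𝒦 : |wʲ| ≤ 1, j = 1,…,m}`. -/
def Ktilde {m : ℕ} (K : Set (Fin m → ℝ)) : Set (Fin m → ℝ) :=
  {w ∈ K | ∀ j, |w j| ≤ 1}

/-- An auxiliary process `(ν,α,ω,x)`: ν is a finite nonnegative measure on [0,T],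
α and ω are Borel controls with values in A(t) and 𝒦̃ (Lebesgue-a.e. and ν-a.e.),
`t ↦ 𝔤(t,α(t),ω(t))` is ν-integrable, and x is a BV solution of the auxiliary
delayed integral equation with history ζ. -/
structure IsAuxProcess (T h : ℝ) {n m q N : ℕ} (hdel : Fin (N + 1) → ℝ)
    (f : ℝ → Hist n N → (Fin q → ℝ) → Ev n)
    (G : ℝ → (Fin q → ℝ) → Matrix (Fin n) (Fin m) ℝ)
    (ζ : ℝ → Ev n) (A : ℝ → Set (Fin q → ℝ)) (K : Set (Fin m → ℝ))
    (ν : Measure ℝ) (α : ℝ → Fin q → ℝ) (ω : ℝ → Fin m → ℝ) (x : ℝ → Ev n) : Prop where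
  finite : IsFiniteMeasure ν
  supported : ∀ B : Set ℝ, MeasurableSet B → Disjoint B (Icc 0 T) → ν B = 0
  αmeas : Measurable α
  ωmeas : Measurable ω
  αae : ∀ᵐ t ∂(volume.restrict (Icc 0 T)), α t ∈ A t
  αaeν : ∀ᵐ t ∂ν, α t ∈ A t
  ωae : ∀ᵐ t ∂(volume.restrict (Icc 0 T)), ω t ∈ Ktilde K
  ωaeν : ∀ᵐ t ∂ν, ω t ∈ Ktilde K
  ginteg : IntegrableOn (fun t => gfrak G t (α t) (ω t)) (Icc 0 T) ν
  bv : BoundedVariationOn x (Icc 0 T)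
  init : ∀ᵐ t ∂(volume.restrict (Ico (-h) 0)), x t = ζ t
  finteg : IntegrableOn (fun s => f s (histOf hdel x s) (α s)) (Icc 0 T) volume
  eq : ∀ t ∈ Ioc 0 T, x t = x 0 + (∫ s in (0:ℝ)..t, f s (histOf hdel x s) (α s))
        + ∫ s in Icc 0 t, gfrak G s (α s) (ω s) ∂ν

/-!
With `d = 1 / (1 + Σᵢ |Σⱼ gᵢⱼ(t,α(t)) ωʲ(t)|)`, the measure `μ` has density `c = d • ω` with
respect to `ν`. Since `d > 0` and `ω ∈ 𝒦`, `c` takes values in the closed convex cone `𝒦`, hence so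
does every `μ(B) = ∫_B c dν`. The total variation `|μ|` has density `ρ = Σⱼ |cʲ|` with respect
to `ν` and `dμ/d|μ| = c / ρ`, so `G (dμ/d|μ|) d|μ| = G c dν = 𝔤 dν`: the impulsive and the
auxiliary fast dynamics have the same integrals, and `x` solves both equations.
-/

open scoped Matrix

theorem ENNReal.ofReal_add_ofReal_neg (a : ℝ) :
    ENNReal.ofReal a + ENNReal.ofReal (-a) = ENNReal.ofReal |a| := by
  rcases le_total 0 a with ha | ha
  · simp [abs_of_nonneg ha, ha]
  · simp [abs_of_nonpos ha, ha]

namespace MeasureTheory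

variable {α : Type*} [MeasurableSpace α] {ν : Measure α}

theorem withDensity_finsetSum {ι : Type*} (s : Finset ι) {f : ι → α → ENNReal}
    (hf : ∀ i, AEMeasurable (f i) ν) :
    ν.withDensity (fun x => ∑ i ∈ s, f i x) = ∑ i ∈ s, ν.withDensity (f i) := by
  ext B hB
  simp only [Measure.coe_finsetSum, Finset.sum_apply, withDensity_apply _ hB]
  exact lintegral_finsetSum' s fun i _ => (hf i).restrict

theorem SignedMeasure.totalVariation_withDensityᵥ {f : α → ℝ} (hf : Integrable f ν) :
    SignedMeasure.totalVariation (ν.withDensityᵥ f) =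
      ν.withDensity fun x => ENNReal.ofReal |f x| := by
  have hmk : ν.withDensityᵥ f = 0 + ν.withDensityᵥ (hf.1.mk f) := by
    rw [zero_add]
    exact WithDensityᵥEq.congr_ae hf.1.ae_eq_mk
  rw [SignedMeasure.totalVariation, SignedMeasure.toJordanDecomposition_eq_of_eq_add_withDensity
    hf.1.measurable_mk (hf.congr hf.1.ae_eq_mk) VectorMeasure.MutuallySingular.zero_left hmk]
  simp only [SignedMeasure.toJordanDecomposition_zero, JordanDecomposition.zero_posPart,
    JordanDecomposition.zero_negPart, zero_add]
  rw [← withDensity_add_left hf.1.measurable_mk.ennreal_ofReal]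
  refine withDensity_congr_ae (hf.1.ae_eq_mk.mono fun x hx => ?_)
  simp only [Pi.add_apply, ENNReal.ofReal_add_ofReal_neg, hx]

end MeasureTheory

theorem IsClosed.zero_mem_of_smul_mem {E : Type*} [TopologicalSpace E] [AddCommMonoid E]
    [Module ℝ E] [ContinuousSMul ℝ E] {K : Set E} (hKc : IsClosed K)
    (hKcone : ∀ w ∈ K, ∀ r : ℝ, 0 < r → r • w ∈ K) (hK : K.Nonempty) : (0 : E) ∈ K := by
  obtain ⟨w, hw⟩ := hK
  have hlim : Tendsto (fun r : ℝ => r • w) (𝓝[>] 0) (𝓝 0) := by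
    have hcont : Continuous fun r : ℝ => r • w := continuous_id.smul continuous_const
    simpa using (hcont.tendsto 0).mono_left nhdsWithin_le_nhds
  exact hKc.mem_of_tendsto hlim (eventually_nhdsWithin_of_forall fun r hr => hKcone w hw r hr)

theorem Convex.integral_mem_of_smul_mem {α E : Type*} [MeasurableSpace α] [NormedAddCommGroup E]
    [NormedSpace ℝ E] [CompleteSpace E] {μ : Measure α} [IsFiniteMeasure μ] {K : Set E}
    (hKv : Convex ℝ K) (hKc : IsClosed K) (hKcone : ∀ w ∈ K, ∀ r : ℝ, 0 < r → r • w ∈ K)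
    (hK0 : (0 : E) ∈ K) {f : α → E} (hf : Integrable f μ) (hfK : ∀ᵐ x ∂μ, f x ∈ K) :
    ∫ x, f x ∂μ ∈ K := by
  rcases eq_zero_or_neZero μ with rfl | hμ
  · simpa using hK0
  rw [← measure_smul_average]
  exact hKcone _ (hKv.average_mem hKc hfK hf) _ measureReal_univ_pos

def l1Norm {m : ℕ} (v : Fin m → ℝ) : ℝ := ∑ j, |v j|

theorem l1Norm_nonneg {m : ℕ} (v : Fin m → ℝ) : 0 ≤ l1Norm v :=
  Finset.sum_nonneg fun _ _ => abs_nonneg _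

theorem abs_le_l1Norm {m : ℕ} (v : Fin m → ℝ) (j : Fin m) : |v j| ≤ l1Norm v :=
  Finset.single_le_sum (f := fun j => |v j|) (fun _ _ => abs_nonneg _) (Finset.mem_univ j)

theorem measurable_l1Norm {m : ℕ} : Measurable (l1Norm (m := m)) :=
  Finset.measurable_sum _ fun j _ => (measurable_pi_apply j).abs

theorem toNNReal_l1Norm_smul_inv_smul {m : ℕ} (v : Fin m → ℝ) :
    (l1Norm v).toNNReal • (l1Norm v)⁻¹ • v = v := by
  rw [NNReal.smul_def, Real.coe_toNNReal _ (l1Norm_nonneg v)]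
  rcases eq_or_ne (l1Norm v) 0 with h0 | h0
  · ext j
    simpa [h0] using (abs_nonpos_iff.mp (h0 ▸ abs_le_l1Norm v j)).symm
  · exact smul_inv_smul₀ h0 v

theorem toNNReal_l1Norm_smul_mulVec_inv_smul {n m : ℕ} (M : Matrix (Fin n) (Fin m) ℝ)
    (v : Fin m → ℝ) : (l1Norm v).toNNReal • M *ᵥ ((l1Norm v)⁻¹ • v) = M *ᵥ v := by
  rw [← Matrix.mulVec_smul, toNNReal_l1Norm_smul_inv_smul]

section WithDensityVector

variable {m : ℕ} {ν : Measure ℝ} {g : ℝ → Fin m → ℝ}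

theorem MeasureTheory.Integrable.aemeasurable_toNNReal_l1Norm (hg : Integrable g ν) :
    AEMeasurable (fun t => (l1Norm (g t)).toNNReal) ν :=
  (measurable_l1Norm.comp_aemeasurable hg.1.aemeasurable).real_toNNReal

theorem tvm_withDensityᵥ (hg : Integrable g ν) :
    tvm (fun j => ν.withDensityᵥ fun t => g t j) =
      ν.withDensity fun t => (l1Norm (g t)).toNNReal := by
  have hgj := hg.eval
  simp only [tvm, SignedMeasure.totalVariation_withDensityᵥ (hgj _)]
  rw [← withDensity_finsetSum _ fun j => (hgj j).1.aemeasurable.abs.ennreal_ofReal]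
  congr with t
  exact (ENNReal.ofReal_sum_of_nonneg fun j _ => abs_nonneg _).symm

theorem rnd_withDensityᵥ_ae (hg : Integrable g ν) :
    ∀ᵐ t ∂tvm (fun j => ν.withDensityᵥ fun t => g t j),
      rnd (fun j => ν.withDensityᵥ fun t => g t j) t = (l1Norm (g t))⁻¹ • g t := by
  set μ : Fin m → SignedMeasure ℝ := fun j => ν.withDensityᵥ fun t => g t j
  set φ : Fin m → ℝ → ℝ := fun j t => ((l1Norm (g t))⁻¹ • g t) j
  have hρ := hg.aemeasurable_toNNReal_l1Norm
  have htv := tvm_withDensityᵥ hg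
  have hsmul : ∀ j t, (l1Norm (g t)).toNNReal • φ j t = g t j :=
    fun j t => congrFun (toNNReal_l1Norm_smul_inv_smul (g t)) j
  have hint : ∀ j, Integrable (φ j) (tvm μ) := fun j => by
    rw [htv, integrable_withDensity_iff_integrable_smul₀ hρ]
    simpa only [hsmul] using hg.eval j
  have hμ : ∀ j, μ j = (tvm μ).withDensityᵥ (φ j) := fun j => by
    have hsmul' : ((fun t => (l1Norm (g t)).toNNReal) • φ j) = fun t => g t j :=
      funext (hsmul j)
    rw [htv, ← withDensityᵥ_smul_eq_withDensityᵥ_withDensity hρ (hsmul' ▸ hg.eval j), hsmul']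
  have hrn : ∀ j, ∀ᵐ t ∂tvm μ, φ j t = rnd μ t j := fun j =>
    SignedMeasure.eq_rnDeriv 0 _ (hint j) VectorMeasure.MutuallySingular.zero_left
      (by rw [zero_add, ← hμ])
  filter_upwards [ae_all_iff.mpr hrn] with t ht
  exact funext fun j => (ht j).symm

theorem muInt_withDensityᵥ_apply (hg : Integrable g ν) {n : ℕ}
    (Ψ : ℝ → Matrix (Fin n) (Fin m) ℝ) {B : Set ℝ} (hB : MeasurableSet B) (i : Fin n) :
    muInt (fun j => ν.withDensityᵥ fun t => g t j) Ψ B i = ∫ t in B, (Ψ t *ᵥ g t) i ∂ν := by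
  calc muInt (fun j => ν.withDensityᵥ fun t => g t j) Ψ B i
      = ∫ t in B, (Ψ t *ᵥ rnd (fun j => ν.withDensityᵥ fun t => g t j) t) i
          ∂tvm (fun j => ν.withDensityᵥ fun t => g t j) := rfl
    _ = ∫ t in B, (Ψ t *ᵥ ((l1Norm (g t))⁻¹ • g t)) i
          ∂tvm (fun j => ν.withDensityᵥ fun t => g t j) :=
        integral_congr_ae (ae_restrict_of_ae ((rnd_withDensityᵥ_ae hg).mono fun t ht => by
          simp only [ht]))
    _ = ∫ t in B, (l1Norm (g t)).toNNReal • (Ψ t *ᵥ ((l1Norm (g t))⁻¹ • g t)) i ∂ν := by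
        rw [tvm_withDensityᵥ hg]
        exact setIntegral_withDensity_eq_setIntegral_smul₀
          hg.aemeasurable_toNNReal_l1Norm.restrict _ hB
    _ = ∫ t in B, (Ψ t *ᵥ g t) i ∂ν :=
        setIntegral_congr_fun hB fun t _ => congrFun (toNNReal_l1Norm_smul_mulVec_inv_smul _ _) i

theorem muIntegrable_withDensityᵥ (hg : Integrable g ν) {n : ℕ}
    {Ψ : ℝ → Matrix (Fin n) (Fin m) ℝ} {T : ℝ}
    (hΨg : IntegrableOn (fun t => Ψ t *ᵥ g t) (Icc 0 T) ν) :
    MuIntegrable T (fun j => ν.withDensityᵥ fun t => g t j) Ψ := by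
  refine Integrable.congr (f := fun t => Ψ t *ᵥ ((l1Norm (g t))⁻¹ • g t)) ?_
    (ae_restrict_of_ae ((rnd_withDensityᵥ_ae hg).mono fun t ht => by simp only [ht]))
  rw [tvm_withDensityᵥ hg, restrict_withDensity measurableSet_Icc,
    integrable_withDensity_iff_integrable_smul₀ hg.aemeasurable_toNNReal_l1Norm.restrict]
  simp only [toNNReal_l1Norm_smul_mulVec_inv_smul]
  exact hΨg

end WithDensityVector

theorem den_pos {n m : ℕ} (M : Matrix (Fin n) (Fin m) ℝ) (w : Fin m → ℝ) : 0 < den M w :=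
  add_pos_of_pos_of_nonneg one_pos (Finset.sum_nonneg fun _ _ => abs_nonneg _)

theorem inv_den_le_one {n m : ℕ} (M : Matrix (Fin n) (Fin m) ℝ) (w : Fin m → ℝ) :
    (den M w)⁻¹ ≤ 1 :=
  inv_le_one_of_one_le₀ (le_add_of_nonneg_right (Finset.sum_nonneg fun _ _ => abs_nonneg _))

theorem sum_abs_gfrak {n m q : ℕ} (G : ℝ → (Fin q → ℝ) → Matrix (Fin n) (Fin m) ℝ) (t : ℝ)
    (a : Fin q → ℝ) (w : Fin m → ℝ) :
    ∑ i, |gfrak G t a w i| = 1 - (den (G t a) w)⁻¹ := by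
  have hpos := den_pos (G t a) w
  have habs : ∀ i, |gfrak G t a w i| = (den (G t a) w)⁻¹ * |(G t a *ᵥ w) i| := fun i => by
    change |(den (G t a) w)⁻¹ * (G t a *ᵥ w) i| = _
    rw [abs_mul, abs_of_pos (inv_pos.mpr hpos)]
  have hsum : ∑ i, |(G t a *ᵥ w) i| = den (G t a) w - 1 := by
    rw [den]
    ring
  rw [Finset.sum_congr rfl fun i _ => habs i, ← Finset.mul_sum, hsum, mul_sub, mul_one,
    inv_mul_cancel₀ hpos.ne']

def impulseDensity {n m q : ℕ} (G : ℝ → (Fin q → ℝ) → Matrix (Fin n) (Fin m) ℝ)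
    (α : ℝ → Fin q → ℝ) (ω : ℝ → Fin m → ℝ) (t : ℝ) : Fin m → ℝ :=
  (den (G t (α t)) (ω t))⁻¹ • ω t

def impulseMeasure {n m q : ℕ} (ν : Measure ℝ) (G : ℝ → (Fin q → ℝ) → Matrix (Fin n) (Fin m) ℝ)
    (α : ℝ → Fin q → ℝ) (ω : ℝ → Fin m → ℝ) : Fin m → SignedMeasure ℝ :=
  fun j => ν.withDensityᵥ fun t => impulseDensity G α ω t j

theorem mulVec_impulseDensity {n m q : ℕ} (G : ℝ → (Fin q → ℝ) → Matrix (Fin n) (Fin m) ℝ)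
    (α : ℝ → Fin q → ℝ) (ω : ℝ → Fin m → ℝ) (t : ℝ) :
    G t (α t) *ᵥ impulseDensity G α ω t = (gfrak G t (α t) (ω t)).ofLp := by
  rw [impulseDensity, Matrix.mulVec_smul]
  rfl

namespace IsAuxProcess

variable {T h : ℝ} {n m q N : ℕ} {hdel : Fin (N + 1) → ℝ}
  {f : ℝ → Hist n N → (Fin q → ℝ) → Ev n} {G : ℝ → (Fin q → ℝ) → Matrix (Fin n) (Fin m) ℝ}
  {ζ : ℝ → Ev n} {A : ℝ → Set (Fin q → ℝ)} {K : Set (Fin m → ℝ)} {ν : Measure ℝ}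
  {α : ℝ → Fin q → ℝ} {ω : ℝ → Fin m → ℝ} {x : ℝ → Ev n}

theorem integrable_gfrak (haux : IsAuxProcess T h hdel f G ζ A K ν α ω x) :
    Integrable (fun t => gfrak G t (α t) (ω t)) ν := by
  have hsupp : ∀ᵐ t ∂ν, t ∈ Icc 0 T :=
    haux.supported _ measurableSet_Icc.compl disjoint_compl_left
  simpa only [IntegrableOn, Measure.restrict_eq_self_of_ae_mem hsupp] using haux.ginteg

/-- `G` is not assumed measurable: the denominator is recovered from the integrable `𝔤` through
`sum_abs_gfrak`. -/
theorem aemeasurable_inv_den (haux : IsAuxProcess T h hdel f G ζ A K ν α ω x) :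
    AEMeasurable (fun t => (den (G t (α t)) (ω t))⁻¹) ν := by
  have hgfrak := haux.integrable_gfrak.eval_piLp
  have hsum : AEMeasurable (fun t => 1 - ∑ i, |gfrak G t (α t) (ω t) i|) ν :=
    aemeasurable_const.sub
      (Finset.aemeasurable_fun_sum _ fun i _ => (hgfrak i).1.aemeasurable.abs)
  simpa only [sum_abs_gfrak, sub_sub_cancel] using hsum

theorem integrable_impulseDensity (haux : IsAuxProcess T h hdel f G ζ A K ν α ω x) :
    Integrable (impulseDensity G α ω) ν := by
  have := haux.finite
  refine Integrable.mono' (integrable_const (1 : ℝ))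
    (haux.aemeasurable_inv_den.aestronglyMeasurable.smul haux.ωmeas.aestronglyMeasurable) ?_
  filter_upwards [haux.ωaeν] with t ht
  have hden : ‖(den (G t (α t)) (ω t))⁻¹‖ ≤ 1 := by
    rw [Real.norm_of_nonneg (inv_nonneg.mpr (den_pos _ _).le)]
    exact inv_den_le_one _ _
  rw [impulseDensity, norm_smul]
  exact mul_le_one₀ hden (norm_nonneg _) ((pi_norm_le_iff_of_nonneg zero_le_one).mpr ht.2)

theorem impulseMeasure_apply (haux : IsAuxProcess T h hdel f G ζ A K ν α ω x) {B : Set ℝ}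
    (hB : MeasurableSet B) (j : Fin m) :
    impulseMeasure ν G α ω j B = ∫ t in B, ω t j / den (G t (α t)) (ω t) ∂ν := by
  rw [impulseMeasure, withDensityᵥ_apply (haux.integrable_impulseDensity.eval j) hB]
  simp only [impulseDensity, Pi.smul_apply, smul_eq_mul, div_eq_inv_mul]

theorem impulseMeasure_apply_eq_zero (haux : IsAuxProcess T h hdel f G ζ A K ν α ω x)
    {B : Set ℝ} (hB : MeasurableSet B) (hνB : ν B = 0) (j : Fin m) :
    impulseMeasure ν G α ω j B = 0 := by
  rw [haux.impulseMeasure_apply hB, Measure.restrict_eq_zero.mpr hνB, integral_zero_measure]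

theorem zero_mem (hT : 0 < T) (hKclosed : IsClosed K)
    (hKcone : ∀ w ∈ K, ∀ r : ℝ, 0 < r → r • w ∈ K)
    (haux : IsAuxProcess T h hdel f G ζ A K ν α ω x) : (0 : Fin m → ℝ) ∈ K := by
  have : (ae (volume.restrict (Icc 0 T))).NeBot := by
    rw [ae_neBot, Ne, Measure.restrict_eq_zero, Real.volume_Icc]
    simpa using hT
  obtain ⟨_, ht⟩ := haux.ωae.exists
  exact hKclosed.zero_mem_of_smul_mem hKcone ⟨_, ht.1⟩

theorem impulseMeasure_mem (hT : 0 < T) (hKclosed : IsClosed K) (hKconvex : Convex ℝ K)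
    (hKcone : ∀ w ∈ K, ∀ r : ℝ, 0 < r → r • w ∈ K)
    (haux : IsAuxProcess T h hdel f G ζ A K ν α ω x) {B : Set ℝ} (hB : MeasurableSet B) :
    (fun j => impulseMeasure ν G α ω j B) ∈ K := by
  have := haux.finite
  have hc := haux.integrable_impulseDensity
  have hvec : (fun j => impulseMeasure ν G α ω j B) = ∫ t in B, impulseDensity G α ω t ∂ν := by
    ext j
    rw [eval_integral hc.restrict.eval]
    exact withDensityᵥ_apply (hc.eval j) hB
  have hcK : ∀ᵐ t ∂ν, impulseDensity G α ω t ∈ K :=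
    haux.ωaeν.mono fun t ht => hKcone _ ht.1 _ (inv_pos.mpr (den_pos _ _))
  rw [hvec]
  exact hKconvex.integral_mem_of_smul_mem hKclosed hKcone (haux.zero_mem hT hKclosed hKcone)
    hc.restrict (ae_restrict_of_ae hcK)

theorem muIntegrable_impulseMeasure (haux : IsAuxProcess T h hdel f G ζ A K ν α ω x) :
    MuIntegrable T (impulseMeasure ν G α ω) (fun t => G t (α t)) := by
  refine muIntegrable_withDensityᵥ haux.integrable_impulseDensity ?_
  simp only [mulVec_impulseDensity]
  exact Integrable.of_eval haux.ginteg.eval_piLp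

theorem muInt_impulseMeasure (haux : IsAuxProcess T h hdel f G ζ A K ν α ω x) {B : Set ℝ}
    (hB : MeasurableSet B) :
    muInt (impulseMeasure ν G α ω) (fun t => G t (α t)) B =
      ∫ t in B, gfrak G t (α t) (ω t) ∂ν := by
  ext i
  unfold impulseMeasure
  rw [muInt_withDensityᵥ_apply haux.integrable_impulseDensity _ hB,
    eval_integral_piLp haux.integrable_gfrak.restrict.eval_piLp]
  simp only [mulVec_impulseDensity]

theorem isImpulsiveControl (hT : 0 < T) (hKclosed : IsClosed K) (hKconvex : Convex ℝ K)
    (hKcone : ∀ w ∈ K, ∀ r : ℝ, 0 < r → r • w ∈ K)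
    (haux : IsAuxProcess T h hdel f G ζ A K ν α ω x) :
    IsImpulsiveControl T K A G (impulseMeasure ν G α ω) α where
  supported j B hB hdisj := haux.impulseMeasure_apply_eq_zero hB (haux.supported B hB hdisj) j
  cone _ hB := haux.impulseMeasure_mem hT hKclosed hKconvex hKcone hB
  meas := haux.αmeas
  mem_ae := haux.αae
  mem_tv := by
    unfold impulseMeasure
    rw [tvm_withDensityᵥ haux.integrable_impulseDensity]
    exact (withDensity_absolutelyContinuous ν _).ae_le haux.αaeν
  integ := haux.muIntegrable_impulseMeasure

theorem isTrajectory (haux : IsAuxProcess T h hdel f G ζ A K ν α ω x) :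
    IsTrajectory T h hdel f G ζ (impulseMeasure ν G α ω) α x where
  bv := haux.bv
  init := haux.init
  integ := haux.finteg
  eq t ht := by rw [haux.eq t ht, haux.muInt_impulseMeasure measurableSet_Icc]

end IsAuxProcess

theorem auxiliary_process_to_impulsive_process_general
    (T : ℝ) (hT : 0 < T) (n m q N : ℕ)
    (hdel : Fin (N + 1) → ℝ)
    (h : ℝ)
    (K : Set (Fin m → ℝ)) (hKclosed : IsClosed K) (hKconvex : Convex ℝ K)
    (hKcone : ∀ w ∈ K, ∀ r : ℝ, 0 < r → r • w ∈ K)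
    (A : ℝ → Set (Fin q → ℝ))
    (f : ℝ → Hist n N → (Fin q → ℝ) → Ev n)
    (G : ℝ → (Fin q → ℝ) → Matrix (Fin n) (Fin m) ℝ)
    (ζ : ℝ → Ev n)
    -- the auxiliary process (ν,α,ω,x)
    (ν : Measure ℝ) (α : ℝ → Fin q → ℝ) (ω : ℝ → Fin m → ℝ) (x : ℝ → Ev n)
    (haux : IsAuxProcess T h hdel f G ζ A K ν α ω x) :
    ∃ μ : Fin m → SignedMeasure ℝ,
      -- μ(dt) = ω(t) ν(dt) / (1+Σᵢ|Σⱼ g_{ij}(t,α(t)) ωʲ(t)|)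
      (∀ j, ∀ B : Set ℝ, MeasurableSet B →
        μ j B = ∫ t in B, ω t j / den (G t (α t)) (ω t) ∂ν) ∧
      -- μ(B) ∈ 𝒦 for every Borel B
      (∀ B : Set ℝ, MeasurableSet B → (fun j => μ j B) ∈ K) ∧
      -- μ ≪ ν
      (∀ B : Set ℝ, MeasurableSet B → ν B = 0 → ∀ j, μ j B = 0) ∧
      -- t ↦ G(t,α(t)) is μ-integrable and the fast-dynamics integrals coincide
      MuIntegrable T μ (fun t => G t (α t)) ∧
      (∀ B : Set ℝ, B ⊆ Icc 0 T → MeasurableSet B →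
        muInt μ (fun t => G t (α t)) B = ∫ t in B, gfrak G t (α t) (ω t) ∂ν) ∧
      -- (μ,α,x) is an impulsive process
      IsImpulsiveControl T K A G μ α ∧
      IsTrajectory T h hdel f G ζ μ α x ∧
      -- if ν ≪ Lebesgue then μ ≪ Lebesgue
      ((ν ≪ (volume : Measure ℝ)) →
        ∀ j, ∀ B : Set ℝ, MeasurableSet B → volume B = 0 → μ j B = 0) :=
  ⟨impulseMeasure ν G α ω, fun j _ hB => haux.impulseMeasure_apply hB j,
    fun _ hB => haux.impulseMeasure_mem hT hKclosed hKconvex hKcone hB,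
    fun _ hB hνB j => haux.impulseMeasure_apply_eq_zero hB hνB j,
    haux.muIntegrable_impulseMeasure, fun _ _ hB => haux.muInt_impulseMeasure hB,
    haux.isImpulsiveControl hT hKclosed hKconvex hKcone, haux.isTrajectory,
    fun hac j _ hB hvol => haux.impulseMeasure_apply_eq_zero hB (hac hvol) j⟩

/-- **From auxiliary processes to impulsive processes** (Proposition 2.4 (ii)).
Given an auxiliary process (ν,α,ω,x), the ℝᵐ-valued measure
μ(dt) = ω(t)ν(dt)/(1+Σ_i|Σ_j g_{ij}(t,α(t))ω^j(t)|) takes values in 𝒦, is absolutely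
continuous w.r.t. ν, G(·,α(·)) is μ-integrable with the two fast-dynamics integrals
coinciding on every Borel set, (μ,α,x) is an impulsive process, and if ν ≪ Lebesgue
then μ ≪ Lebesgue. -/
theorem auxiliary_process_to_impulsive_process
    (T : ℝ) (hT : 0 < T) (n m q N : ℕ) (hN : 1 ≤ N)
    (hdel : Fin (N + 1) → ℝ) (hdel0 : hdel 0 = 0) (hmono : StrictMono hdel)
    (h : ℝ) (hh : h = hdel (Fin.last N))
    (K : Set (Fin m → ℝ)) (hKclosed : IsClosed K) (hKconvex : Convex ℝ K)
    (hKcone : ∀ w ∈ K, ∀ r : ℝ, 0 < r → r • w ∈ K)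
    (A : ℝ → Set (Fin q → ℝ))
    (f : ℝ → Hist n N → (Fin q → ℝ) → Ev n)
    (G : ℝ → (Fin q → ℝ) → Matrix (Fin n) (Fin m) ℝ)
    (ζ : ℝ → Ev n)
    (hζmeas : AEStronglyMeasurable ζ (volume.restrict (Icc (-h) 0)))
    (hζbdd : ∃ C : ℝ, ∀ᵐ t ∂(volume.restrict (Icc (-h) 0)), ‖ζ t‖ ≤ C)
    -- (H1)
    (H1 : MeasurableSet[LBprod q] {p : ℝ × (Fin q → ℝ) | p.2 ∈ A p.1})
    -- (H2)
    (H2meas : ∀ z : Hist n N, Measurable[LBprod q] (fun p : ℝ × (Fin q → ℝ) => f p.1 z p.2))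
    (H2lip : ∀ M : ℝ, 0 < M → ∃ L : ℝ → ℝ, (∀ t, 0 ≤ L t) ∧
      IntegrableOn L (Icc 0 T) volume ∧
      ∀ᵐ t ∂(volume.restrict (Icc 0 T)), ∀ z y : Hist n N, ‖z‖ ≤ M → ‖y‖ ≤ M →
        ∀ a ∈ A t, ‖f t z a - f t y a‖ ≤ L t * ‖z - y‖)
    -- (H3)
    (H3 : ∃ c : ℝ → ℝ, (∀ t, 0 ≤ c t) ∧ IntegrableOn c (Icc 0 T) volume ∧
      ∀ᵐ t ∂(volume.restrict (Icc 0 T)), ∀ z : Hist n N, ∀ a ∈ A t,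
        ‖f t z a‖ ≤ c t * (1 + ‖z‖))
    -- the auxiliary process (ν,α,ω,x)
    (ν : Measure ℝ) (α : ℝ → Fin q → ℝ) (ω : ℝ → Fin m → ℝ) (x : ℝ → Ev n)
    (haux : IsAuxProcess T h hdel f G ζ A K ν α ω x) :
    ∃ μ : Fin m → SignedMeasure ℝ,
      -- μ(dt) = ω(t) ν(dt) / (1+Σᵢ|Σⱼ g_{ij}(t,α(t)) ωʲ(t)|)
      (∀ j, ∀ B : Set ℝ, MeasurableSet B →
        μ j B = ∫ t in B, ω t j / den (G t (α t)) (ω t) ∂ν) ∧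
      -- μ(B) ∈ 𝒦 for every Borel B
      (∀ B : Set ℝ, MeasurableSet B → (fun j => μ j B) ∈ K) ∧
      -- μ ≪ ν
      (∀ B : Set ℝ, MeasurableSet B → ν B = 0 → ∀ j, μ j B = 0) ∧
      -- t ↦ G(t,α(t)) is μ-integrable and the fast-dynamics integrals coincide
      MuIntegrable T μ (fun t => G t (α t)) ∧
      (∀ B : Set ℝ, B ⊆ Icc 0 T → MeasurableSet B →
        muInt μ (fun t => G t (α t)) B = ∫ t in B, gfrak G t (α t) (ω t) ∂ν) ∧
      -- (μ,α,x) is an impulsive process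
      IsImpulsiveControl T K A G μ α ∧
      IsTrajectory T h hdel f G ζ μ α x ∧
      -- if ν ≪ Lebesgue then μ ≪ Lebesgue
      ((ν ≪ (volume : Measure ℝ)) →
        ∀ j, ∀ B : Set ℝ, MeasurableSet B → volume B = 0 → μ j B = 0) :=
  auxiliary_process_to_impulsive_process_general T hT n m q N hdel h K hKclosed hKconvex hKcone A f
    G ζ ν α ω x haux

end
end

section
/- Let γ and γ_i (i ≥ 1) be ℝ^k-valued measures on [0,T]. If the sequence (γ_i) is uniformly bounded in total variation and there exists a Borel set ℰ ⊆ [0,T] with full Lebesgue measure and T ∈ ℰ such that lim_i ∫_{[0,t]} γ_i(ds) = ∫_{[0,t]} γ(ds) for all t ∈ ℰ, then γ_i ⇀* γ. -/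
/-! For `C¹` test functions `f`, Fubini gives the integration by parts formula
`∫_{[0,T]} f dγ = f T γ[0,T] - ∫_0^T f' t γ[0,t] dt`. The primitives `γ_i[0,t]` are bounded by
the total variation and converge almost everywhere, so dominated convergence yields convergence
against polynomials; the uniform total variation bound then extends it to every continuous `φ`
through Weierstrass approximation. -/

open MeasureTheory Set Filter Topology

noncomputable section

/-- Integral of a scalar function against a signed measure
(via its Jordan decomposition). -/
def sInt (γ : SignedMeasure ℝ) (B : Set ℝ) (φ : ℝ → ℝ) : ℝ :=
  (∫ t in B, φ t ∂γ.toJordanDecomposition.posPart) -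
    ∫ t in B, φ t ∂γ.toJordanDecomposition.negPart

theorem Metric.tendsto_of_forall_approx {ι α : Type*} [PseudoMetricSpace α] {l : Filter ι}
    {u : ι → α} {x : α}
    (h : ∀ ε > 0, ∃ v : ι → α, ∃ y, Tendsto v l (𝓝 y) ∧ (∀ i, dist (u i) (v i) ≤ ε) ∧
      dist y x ≤ ε) :
    Tendsto u l (𝓝 x) := by
  refine Metric.tendsto_nhds.2 fun ε hε => ?_
  obtain ⟨v, y, hv, huv, hyx⟩ := h (ε / 4) (by positivity)
  filter_upwards [Metric.tendsto_nhds.1 hv (ε / 4) (by positivity)] with i hi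
  calc dist (u i) x ≤ dist (u i) (v i) + dist (v i) y + dist y x := dist_triangle4 _ _ _ _
    _ < ε := by linarith [huv i]

theorem monotone_measureReal_Icc (ν : Measure ℝ) [IsFiniteMeasure ν] (a : ℝ) :
    Monotone fun t => ν.real (Icc a t) :=
  fun _ _ h => measureReal_mono (Icc_subset_Icc_right h)

theorem MeasureTheory.SignedMeasure.measurable_apply_Icc (μ : SignedMeasure ℝ) (a : ℝ) :
    Measurable fun t => μ (Icc a t) := by
  simp_rw [μ.apply_eq_posPart_real_sub_negPart_real measurableSet_Icc]
  exact (monotone_measureReal_Icc _ a).measurable.sub (monotone_measureReal_Icc _ a).measurable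

theorem setIntegral_Icc_eq_by_parts (ν : Measure ℝ) [IsFiniteMeasure ν] {f f' : ℝ → ℝ}
    {a b : ℝ} (hf : ∀ x, HasDerivAt f (f' x) x) (hf' : Continuous f') :
    ∫ s in Icc a b, f s ∂ν = f b * ν.real (Icc a b) - ∫ u in Icc a b, f' u * ν.real (Icc a u) := by
  set I := Icc a b
  set H : ℝ × ℝ → ℝ := {q | q.1 ≤ q.2}.indicator fun q => f' q.2
  have hH : Integrable H ((ν.restrict I).prod (volume.restrict I)) :=
    ((hf'.continuousOn.integrableOn_compact isCompact_Icc).comp_snd _).indicator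
      (measurableSet_le measurable_fst measurable_snd)
  have inner_du : ∀ s ∈ I, ∫ u in I, H (s, u) = f b - f s := by
    intro s hs
    have hIs : I ∩ Ici s = Icc s b := by
      ext x; simp only [I, mem_inter_iff, mem_Icc, mem_Ici]; grind
    change ∫ u in I, (Ici s).indicator f' u = _
    rw [setIntegral_indicator measurableSet_Ici, hIs, integral_Icc_eq_integral_Ioc,
      ← intervalIntegral.integral_of_le hs.2,
      intervalIntegral.integral_eq_sub_of_hasDerivAt (fun x _ => hf x) (hf'.intervalIntegrable _ _)]
  have inner_dν : ∀ u ∈ I, ∫ s in I, H (s, u) ∂ν = f' u * ν.real (Icc a u) := by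
    intro u hu
    have hIu : I ∩ Iic u = Icc a u := by
      ext x; simp only [I, mem_inter_iff, mem_Icc, mem_Iic]; grind
    change ∫ s in I, (Iic u).indicator (fun _ => f' u) s ∂ν = _
    rw [setIntegral_indicator measurableSet_Iic, hIu, setIntegral_const, smul_eq_mul, mul_comm]
  calc ∫ s in I, f s ∂ν
      = ∫ s in I, (f b - ∫ u in I, H (s, u)) ∂ν :=
        setIntegral_congr_fun measurableSet_Icc fun s hs => by simp only [inner_du s hs]; ring
    _ = f b * ν.real I - ∫ s in I, (∫ u in I, H (s, u)) ∂ν := by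
        rw [integral_sub (integrable_const _) hH.integral_prod_left, setIntegral_const,
          smul_eq_mul, mul_comm]
    _ = f b * ν.real I - ∫ u in I, ∫ s in I, H (s, u) ∂ν :=
        congrArg (f b * ν.real I - ·) (integral_integral_swap (f := fun s u => H (s, u)) hH)
    _ = f b * ν.real I - ∫ u in I, f' u * ν.real (Icc a u) := by
        rw [setIntegral_congr_fun measurableSet_Icc inner_dν]

theorem sInt_Icc_eq_by_parts (μ : SignedMeasure ℝ) {f f' : ℝ → ℝ} {a b : ℝ}
    (hf : ∀ x, HasDerivAt f (f' x) x) (hf' : Continuous f') :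
    sInt μ (Icc a b) f = f b * μ (Icc a b) - ∫ u in Icc a b, f' u * μ (Icc a u) := by
  have hint (ν : Measure ℝ) [IsFiniteMeasure ν] :
      IntegrableOn (fun u => f' u * ν.real (Icc a u)) (Icc a b) :=
    (((monotone_measureReal_Icc ν a).monotoneOn _).integrableOn_isCompact isCompact_Icc
      ).continuousOn_mul hf'.continuousOn isCompact_Icc
  have hsplit : ∫ u in Icc a b, f' u * μ (Icc a u) =
      (∫ u in Icc a b, f' u * μ.toJordanDecomposition.posPart.real (Icc a u)) -
        ∫ u in Icc a b, f' u * μ.toJordanDecomposition.negPart.real (Icc a u) := by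
    rw [← integral_sub (hint _) (hint _)]
    simp_rw [μ.apply_eq_posPart_real_sub_negPart_real measurableSet_Icc, mul_sub]
  rw [sInt, setIntegral_Icc_eq_by_parts _ hf hf', setIntegral_Icc_eq_by_parts _ hf hf', hsplit,
    μ.apply_eq_posPart_real_sub_negPart_real measurableSet_Icc]
  ring

theorem abs_sInt_sub_sInt_le (μ : SignedMeasure ℝ) {B : Set ℝ} (hB : IsCompact B)
    {φ ψ : ℝ → ℝ} (hφ : ContinuousOn φ B) (hψ : ContinuousOn ψ B) {δ : ℝ}
    (hδ : ∀ x ∈ B, |φ x - ψ x| ≤ δ) :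
    |sInt μ B φ - sInt μ B ψ| ≤ δ * μ.totalVariation.real B := by
  have hdiff (ν : Measure ℝ) [IsFiniteMeasure ν] :
      |(∫ t in B, φ t ∂ν) - ∫ t in B, ψ t ∂ν| ≤ δ * ν.real B := by
    rw [← integral_sub (hφ.integrableOn_compact hB) (hψ.integrableOn_compact hB)]
    exact norm_setIntegral_le_of_norm_le_const (measure_lt_top _ _)
      fun x hx => (Real.norm_eq_abs _).trans_le (hδ x hx)
  have hsplit : sInt μ B φ - sInt μ B ψ =
      ((∫ t in B, φ t ∂μ.toJordanDecomposition.posPart) -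
        ∫ t in B, ψ t ∂μ.toJordanDecomposition.posPart) -
      ((∫ t in B, φ t ∂μ.toJordanDecomposition.negPart) -
        ∫ t in B, ψ t ∂μ.toJordanDecomposition.negPart) := by
    rw [sInt, sInt]; ring
  rw [hsplit, SignedMeasure.totalVariation, measureReal_add_apply, mul_add]
  exact (abs_sub _ _).trans (add_le_add (hdiff _) (hdiff _))

section Convergence

variable {ι : Type*} {l : Filter ι} {μ : ι → SignedMeasure ℝ} {ν : SignedMeasure ℝ} {C : ℝ}

theorem tendsto_sInt_Icc_of_hasDerivAt [l.IsCountablyGenerated]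
    (hC : ∀ i, (μ i).totalVariation.real univ ≤ C) {a b : ℝ}
    (hb : Tendsto (fun i => μ i (Icc a b)) l (𝓝 (ν (Icc a b))))
    (hae : ∀ᵐ t ∂volume.restrict (Icc a b), Tendsto (fun i => μ i (Icc a t)) l (𝓝 (ν (Icc a t))))
    {f f' : ℝ → ℝ} (hf : ∀ x, HasDerivAt f (f' x) x) (hf' : Continuous f') :
    Tendsto (fun i => sInt (μ i) (Icc a b) f) l (𝓝 (sInt ν (Icc a b) f)) := by
  simp only [sInt_Icc_eq_by_parts _ hf hf']
  obtain ⟨M, hM⟩ := isCompact_Icc.exists_bound_of_continuousOn (s := Icc a b) hf'.continuousOn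
  refine (hb.const_mul _).sub (tendsto_integral_filter_of_dominated_convergence (fun _ => M * C)
    (.of_forall fun i =>
      (hf'.measurable.mul (SignedMeasure.measurable_apply_Icc (μ i) a)).aestronglyMeasurable)
    (.of_forall fun i => ?_) (integrable_const _) (hae.mono fun t ht => ht.const_mul _))
  filter_upwards [ae_restrict_mem measurableSet_Icc] with t ht
  rw [norm_mul]
  have hμt : ‖μ i (Icc a t)‖ ≤ C :=
    ((μ i).norm_le_totalVariation _).trans ((measureReal_mono (subset_univ _)).trans (hC i))
  exact mul_le_mul (hM t ht) hμt (norm_nonneg _) ((norm_nonneg _).trans (hM t ht))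

theorem tendsto_sInt_of_forall_approx (hC : ∀ i, (μ i).totalVariation.real univ ≤ C)
    {B : Set ℝ} (hB : IsCompact B) {φ : ℝ → ℝ} (hφ : ContinuousOn φ B)
    (happrox : ∀ δ > 0, ∃ ψ : ℝ → ℝ, ContinuousOn ψ B ∧ (∀ x ∈ B, |ψ x - φ x| ≤ δ) ∧
      Tendsto (fun i => sInt (μ i) B ψ) l (𝓝 (sInt ν B ψ))) :
    Tendsto (fun i => sInt (μ i) B φ) l (𝓝 (sInt ν B φ)) := by
  set K := |C| + ν.totalVariation.real univ + 1
  have hK : 0 < K := by positivity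
  refine Metric.tendsto_of_forall_approx fun ε hε => ?_
  obtain ⟨ψ, hψ, hψφ, hlim⟩ := happrox (ε / K) (by positivity)
  have hdist (ρ : SignedMeasure ℝ) (hρ : ρ.totalVariation.real univ ≤ K) :
      dist (sInt ρ B ψ) (sInt ρ B φ) ≤ ε :=
    calc dist (sInt ρ B ψ) (sInt ρ B φ) ≤ ε / K * ρ.totalVariation.real B :=
          abs_sInt_sub_sInt_le ρ hB hψ hφ hψφ
      _ ≤ ε / K * K := by gcongr; exact (measureReal_mono (subset_univ _)).trans hρ
      _ = ε := div_mul_cancel₀ ε hK.ne'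
  have hνK : ν.totalVariation.real univ ≤ K := by linarith [abs_nonneg C]
  have hμK (i : ι) : (μ i).totalVariation.real univ ≤ K := by
    linarith [hC i, le_abs_self C, measureReal_nonneg (μ := ν.totalVariation) (s := univ)]
  exact ⟨_, _, hlim, fun i => dist_comm (sInt (μ i) B φ) _ ▸ hdist _ (hμK i), hdist ν hνK⟩

end Convergence

theorem weakStar_of_primitive_convergence_general
    (T : ℝ) (k : ℕ)
    (γi : ℕ → Fin k → SignedMeasure ℝ) (γ : Fin k → SignedMeasure ℝ)
    -- uniform bound in total variation
    (htvbound : ∃ C : ℝ, ∀ i,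
      (∑ j, ((γi i j).totalVariation (univ : Set ℝ)).toReal) ≤ C)
    -- full-measure Borel set ℰ ⊆ [0,T] with T ∈ ℰ on which primitives converge
    (E : Set ℝ)
    (hEfull : volume (Icc 0 T \ E) = 0) (hTE : T ∈ E)
    (hconv : ∀ t ∈ E, ∀ j,
      Tendsto (fun i => γi i j (Icc 0 t)) atTop (nhds (γ j (Icc 0 t)))) :
    -- conclusion: γ_i ⇀* γ
    ∀ j, ∀ φ : ℝ → ℝ, ContinuousOn φ (Icc 0 T) →
      Tendsto (fun i => sInt (γi i j) (Icc 0 T) φ) atTop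
        (nhds (sInt (γ j) (Icc 0 T) φ)) := by
  intro j φ hφ
  obtain ⟨C, hC⟩ := htvbound
  have hCj (i : ℕ) : (γi i j).totalVariation.real univ ≤ C :=
    (Finset.single_le_sum (f := fun j => ((γi i j).totalVariation univ).toReal)
      (fun _ _ => ENNReal.toReal_nonneg) (Finset.mem_univ j)).trans (hC i)
  have hE : ∀ᵐ t ∂volume.restrict (Icc 0 T), t ∈ E := by
    rw [ae_iff, Measure.restrict_apply' measurableSet_Icc, inter_comm]
    exact hEfull
  refine tendsto_sInt_of_forall_approx hCj isCompact_Icc hφ fun δ hδ => ?_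
  obtain ⟨p, hp⟩ := exists_polynomial_near_of_continuousOn 0 T φ hφ δ hδ
  exact ⟨fun x => p.eval x, p.continuous.continuousOn, fun x hx => (hp x hx).le,
    tendsto_sInt_Icc_of_hasDerivAt hCj (hconv T hTE j) (hE.mono fun t ht => hconv t ht j)
      p.hasDerivAt p.derivative.continuous⟩

/-- **Weak-* convergence from convergence of primitives** (Lemma 2.7 (i)).
If a sequence of ℝᵏ-valued measures on [0,T] is uniformly bounded in total variation and
its primitives `t ↦ γ_i([0,t])` converge to those of γ on a full-measure Borel set ℰ
containing T, then γ_i ⇀* γ. -/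
theorem weakStar_of_primitive_convergence
    (T : ℝ) (hT : 0 < T) (k : ℕ)
    (γi : ℕ → Fin k → SignedMeasure ℝ) (γ : Fin k → SignedMeasure ℝ)
    -- measures on [0,T]
    (hsupp : ∀ i j, ∀ B : Set ℝ, MeasurableSet B → Disjoint B (Icc 0 T) → γi i j B = 0)
    (hsupp0 : ∀ j, ∀ B : Set ℝ, MeasurableSet B → Disjoint B (Icc 0 T) → γ j B = 0)
    -- uniform bound in total variation
    (htvbound : ∃ C : ℝ, ∀ i,
      (∑ j, ((γi i j).totalVariation (univ : Set ℝ)).toReal) ≤ C)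
    -- full-measure Borel set ℰ ⊆ [0,T] with T ∈ ℰ on which primitives converge
    (E : Set ℝ) (hEsub : E ⊆ Icc 0 T) (hEmeas : MeasurableSet E)
    (hEfull : volume (Icc 0 T \ E) = 0) (hTE : T ∈ E)
    (hconv : ∀ t ∈ E, ∀ j,
      Tendsto (fun i => γi i j (Icc 0 t)) atTop (nhds (γ j (Icc 0 t)))) :
    -- conclusion: γ_i ⇀* γ
    ∀ j, ∀ φ : ℝ → ℝ, ContinuousOn φ (Icc 0 T) →
      Tendsto (fun i => sInt (γi i j) (Icc 0 T) φ) atTop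
        (nhds (sInt (γ j) (Icc 0 T) φ)) :=
  weakStar_of_primitive_convergence_general T k γi γ htvbound E hEfull hTE hconv

end
end

section
/- Assume (H1)–(H3). Let (μ,α) be an impulsive control, ξ ∈ ℝⁿ, and define x̃₀ : [−h,T] → ℝⁿ by x̃₀(t) := ∫_{[0,t]} G(s,α(s)) μ(ds) for t ∈ (0,T] and x̃₀(t) := 0 for t ∈ [−h,0]. Then a bounded-variation function x : [−h,T] → ℝⁿ is a trajectory associated with (μ,α) with x(0) = ξ if and only if x̃ := x − x̃₀ is absolutely continuous on [0,T] and solves the delayed ordinary differential equation x̃'(t) = f(t, {x̃(t−h_k) + x̃₀(t−h_k)}_{k=0}^N, α(t)) a.e. on [0,T], with x̃(t) = ζ(t) a.e. on [−h,0) and x̃(0) = ξ. -/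
/-!
Once `x̃₀` is subtracted, both sides impose the same conditions pointwise: `x̃₀` vanishes on
`[-h, 0]`, the history of `x̃ + x̃₀` is that of `x`, and for `t > 0` the integral equation for `x`
is the one for `x̃` with `x̃₀(t)` moved to the other side. What remains is that a solution `x`
has bounded variation on `[0, T]`. There `x = ξ + ∫₀ᵗ f + x̃₀`; the Lebesgue integral has
increments bounded by those of `t ↦ ∫₀ᵗ ‖f‖`, and for `0 < s ≤ t` the increment of `x̃₀` is
`∫_{(s,t]} G dμ`, bounded by the increment of the nondecreasing function
`t ↦ ∫_{[0,t]} ‖G ω‖ d|μ|`.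
-/

open MeasureTheory Set Filter Topology

noncomputable section

section Variation

variable {α E F : Type*} [LinearOrder α]

theorem eVariationOn.le_of_edist_le [PseudoEMetricSpace E] [PseudoEMetricSpace F]
    {f : α → E} {g : α → F} {s : Set α}
    (h : ∀ x ∈ s, ∀ y ∈ s, x ≤ y → edist (f y) (f x) ≤ edist (g y) (g x)) :
    eVariationOn f s ≤ eVariationOn g s :=
  iSup_mono fun p => Finset.sum_le_sum fun i _ =>
    h _ (p.2.2.2 i) _ (p.2.2.2 (i + 1)) (p.2.2.1 (Nat.le_succ i))

theorem BoundedVariationOn.of_edist_le [PseudoEMetricSpace E] [PseudoEMetricSpace F]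
    {f : α → E} {g : α → F} {s : Set α} (hg : BoundedVariationOn g s)
    (h : ∀ x ∈ s, ∀ y ∈ s, x ≤ y → edist (f y) (f x) ≤ edist (g y) (g x)) :
    BoundedVariationOn f s :=
  ne_top_of_le_ne_top hg (eVariationOn.le_of_edist_le h)

theorem eVariationOn.add_le [SeminormedAddCommGroup E] (f g : α → E) (s : Set α) :
    eVariationOn (f + g) s ≤ eVariationOn f s + eVariationOn g s := by
  refine iSup_le fun ⟨n, u, hu, us⟩ => ?_
  calc ∑ i ∈ Finset.range n, edist ((f + g) (u (i + 1))) ((f + g) (u i))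
      ≤ ∑ i ∈ Finset.range n,
          (edist (f (u (i + 1))) (f (u i)) + edist (g (u (i + 1))) (g (u i))) :=
        Finset.sum_le_sum fun i _ => edist_add_add_le _ _ _ _
    _ ≤ eVariationOn f s + eVariationOn g s := by
        rw [Finset.sum_add_distrib]
        exact add_le_add (eVariationOn.sum_le hu us) (eVariationOn.sum_le hu us)

theorem BoundedVariationOn.add [SeminormedAddCommGroup E] {f g : α → E} {s : Set α}
    (hf : BoundedVariationOn f s) (hg : BoundedVariationOn g s) :
    BoundedVariationOn (f + g) s :=
  ne_top_of_le_ne_top (ENNReal.add_ne_top.2 ⟨hf, hg⟩) (eVariationOn.add_le f g s)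

theorem BoundedVariationOn.congr [PseudoEMetricSpace E] {f g : α → E} {s : Set α}
    (hf : BoundedVariationOn f s) (h : EqOn f g s) : BoundedVariationOn g s :=
  (eVariationOn.congr h).symm.trans_ne hf

theorem BoundedVariationOn.const_add [SeminormedAddCommGroup E] {f : α → E} {s : Set α}
    (hf : BoundedVariationOn f s) (c : E) : BoundedVariationOn (fun x => c + f x) s :=
  hf.of_edist_le fun _ _ _ _ _ => (edist_add_left c _ _).le

/-- The dominating function `φ` is necessarily monotone on `[a, b]`, with variation
`φ b - φ a`. -/
theorem boundedVariationOn_Icc_of_norm_sub_le_sub [SeminormedAddCommGroup E] {f : α → E}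
    {φ : α → ℝ} {a b : α}
    (h : ∀ s ∈ Icc a b, ∀ t ∈ Icc a b, s ≤ t → ‖f t - f s‖ ≤ φ t - φ s) :
    BoundedVariationOn f (Icc a b) := by
  rcases lt_or_ge b a with hba | hab
  · exact BoundedVariationOn.of_subsingleton (by simp [Icc_eq_empty_of_lt hba])
  have hφ_sub_nonneg : ∀ s ∈ Icc a b, ∀ t ∈ Icc a b, s ≤ t → 0 ≤ φ t - φ s :=
    fun s hs t ht hst => (norm_nonneg _).trans (h s hs t ht hst)
  have hφ : MonotoneOn φ (Icc a b) := fun s hs t ht hst =>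
    sub_nonneg.1 (hφ_sub_nonneg s hs t ht hst)
  have hφ_bv : BoundedVariationOn φ (Icc a b) := by
    simpa using hφ.locallyBoundedVariationOn a b (left_mem_Icc.2 hab) (right_mem_Icc.2 hab)
  refine hφ_bv.of_edist_le fun s hs t ht hst => ?_
  rw [edist_eq_enorm_sub, edist_dist, Real.dist_eq, abs_of_nonneg (hφ_sub_nonneg s hs t ht hst),
    ← ofReal_norm]
  exact ENNReal.ofReal_le_ofReal (h s hs t ht hst)

end Variation

section Integral

variable {E : Type*} [NormedAddCommGroup E] [NormedSpace ℝ E] {a b : ℝ}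

theorem boundedVariationOn_intervalIntegral {F : ℝ → E} (hF : IntegrableOn F (Icc a b)) :
    BoundedVariationOn (fun t => ∫ u in a..t, F u) (Icc a b) := by
  have hF_int : ∀ t ∈ Icc a b, IntervalIntegrable F volume a t := fun t ht =>
    (hF.mono_set (uIcc_of_le ht.1 ▸ Icc_subset_Icc_right ht.2)).intervalIntegrable
  refine boundedVariationOn_Icc_of_norm_sub_le_sub (φ := fun t => ∫ u in a..t, ‖F u‖)
    fun s hs t ht hst => ?_
  rw [intervalIntegral.integral_interval_sub_left (hF_int t ht) (hF_int s hs),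
    intervalIntegral.integral_interval_sub_left (hF_int t ht).norm (hF_int s hs).norm]
  exact intervalIntegral.norm_integral_le_integral_norm hst

theorem setIntegral_Icc_sub_setIntegral_Icc {ν : Measure ℝ} {g : ℝ → E} {s t : ℝ}
    (hg : IntegrableOn g (Icc a t) ν) (has : a ≤ s) (hst : s ≤ t) :
    ∫ r in Icc a t, g r ∂ν - ∫ r in Icc a s, g r ∂ν = ∫ r in Ioc s t, g r ∂ν := by
  rw [← Icc_union_Ioc_eq_Icc has hst, setIntegral_union
      ((Iic_disjoint_Ioc le_rfl).mono_left Icc_subset_Iic_self) measurableSet_Ioc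
      (hg.mono_set (Icc_subset_Icc_right hst))
      (hg.mono_set (Ioc_subset_Icc_self.trans (Icc_subset_Icc_left has))),
    add_sub_cancel_left]

theorem boundedVariationOn_ite_setIntegral_Icc {ν : Measure ℝ} {g : ℝ → E}
    (hg : IntegrableOn g (Icc a b) ν) :
    BoundedVariationOn (fun t => if a < t then ∫ r in Icc a t, g r ∂ν else 0) (Icc a b) := by
  refine boundedVariationOn_Icc_of_norm_sub_le_sub
    (φ := fun t => if a < t then ∫ r in Icc a t, ‖g r‖ ∂ν else 0) fun s hs t ht hst => ?_
  rcases hs.1.eq_or_lt with rfl | has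
  · simp only [lt_irrefl, if_false, sub_zero]
    split_ifs
    · exact norm_integral_le_integral_norm g
    · simp
  · have hg_t : IntegrableOn g (Icc a t) ν := hg.mono_set (Icc_subset_Icc_right ht.2)
    simp only [has, has.trans_le hst, if_true]
    rw [setIntegral_Icc_sub_setIntegral_Icc hg_t has.le hst,
      setIntegral_Icc_sub_setIntegral_Icc hg_t.norm has.le hst]
    exact norm_integral_le_integral_norm g

end Integral

section MuIntegral

variable {T : ℝ} {n m : ℕ} {μ : Fin m → SignedMeasure ℝ} {Ψ : ℝ → Matrix (Fin n) (Fin m) ℝ}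

theorem muInt_eq_setIntegral (hΨ : MuIntegrable T μ Ψ) {B : Set ℝ} (hB : B ⊆ Icc 0 T) :
    muInt μ Ψ B = ∫ t in B, WithLp.toLp 2 ((Ψ t).mulVec (rnd μ t)) ∂(tvm μ) := by
  ext i
  rw [eval_integral_piLp (hΨ.mono_set hB).eval]
  rfl

theorem MuIntegrable.boundedVariationOn_muInt_Icc (hΨ : MuIntegrable T μ Ψ) :
    BoundedVariationOn (fun t => if 0 < t then muInt μ Ψ (Icc 0 t) else 0) (Icc 0 T) := by
  have hg : IntegrableOn (fun t => WithLp.toLp 2 ((Ψ t).mulVec (rnd μ t))) (Icc 0 T) (tvm μ) :=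
    Integrable.of_eval_piLp hΨ.eval
  refine (boundedVariationOn_ite_setIntegral_Icc hg).congr fun t ht => ?_
  simp only [muInt_eq_setIntegral hΨ (Icc_subset_Icc_right ht.2)]

end MuIntegral

theorem trajectory_iff_shifted_solution_general
    (T : ℝ) (n m q N : ℕ)
    (hdel : Fin (N + 1) → ℝ)
    (h : ℝ)
    (K : Set (Fin m → ℝ))
    (A : ℝ → Set (Fin q → ℝ))
    (f : ℝ → Hist n N → (Fin q → ℝ) → Ev n)
    (G : ℝ → (Fin q → ℝ) → Matrix (Fin n) (Fin m) ℝ)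
    (ζ : ℝ → Ev n)
    -- the impulsive control and the initial condition
    (μ : Fin m → SignedMeasure ℝ) (α : ℝ → Fin q → ℝ)
    (hctrl : IsImpulsiveControl T K A G μ α)
    (ξ : Ev n)
    -- x̃₀(t) = ∫_{[0,t]} G(s,α(s)) μ(ds) on (0,T], = 0 on [−h,0]
    (x0til : ℝ → Ev n)
    (hx0til : ∀ t : ℝ, x0til t =
      if 0 < t then muInt μ (fun s => G s (α s)) (Icc 0 t) else 0)
    (x : ℝ → Ev n) :
    (IsTrajectory T h hdel f G ζ μ α x ∧ x 0 = ξ) ↔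
      ((fun t => x t - x0til t) 0 = ξ ∧
       (∀ᵐ t ∂(volume.restrict (Ico (-h) 0)), x t - x0til t = ζ t) ∧
       IntegrableOn
         (fun s => f s (histOf hdel (fun r => (x r - x0til r) + x0til r) s) (α s))
         (Icc 0 T) volume ∧
       (∀ t ∈ Icc 0 T, x t - x0til t = ξ +
          ∫ s in (0:ℝ)..t,
            f s (histOf hdel (fun r => (x r - x0til r) + x0til r) s) (α s))) := by
  obtain rfl : x0til = _ := funext hx0til
  simp only [sub_add_cancel, lt_irrefl, if_false, sub_zero]
  have hinit_iff : (∀ᵐ t ∂(volume.restrict (Ico (-h) 0)),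
      x t - (if 0 < t then muInt μ (fun s => G s (α s)) (Icc 0 t) else 0) = ζ t) ↔
      ∀ᵐ t ∂(volume.restrict (Ico (-h) 0)), x t = ζ t :=
    eventually_congr <| (ae_restrict_mem measurableSet_Ico).mono fun t ht => by
      simp [not_lt.2 ht.2.le]
  constructor
  · rintro ⟨traj, rfl⟩
    refine ⟨rfl, hinit_iff.2 traj.init, traj.integ, fun t ht => ?_⟩
    rcases ht.1.eq_or_lt with rfl | ht0
    · simp
    · rw [traj.eq t ⟨ht0, ht.2⟩, if_pos ht0, add_sub_cancel_right]
  · rintro ⟨rfl, hζ, hint, heq⟩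
    have hx : EqOn (fun t => (x 0 + ∫ s in (0:ℝ)..t, f s (histOf hdel x s) (α s)) +
        if 0 < t then muInt μ (fun s => G s (α s)) (Icc 0 t) else 0) x (Icc 0 T) :=
      fun t ht => (eq_add_of_sub_eq (heq t ht)).symm
    refine ⟨⟨?_, hinit_iff.1 hζ, hint, fun t ht => ?_⟩, rfl⟩
    · exact (((boundedVariationOn_intervalIntegral hint).const_add _).add
        hctrl.integ.boundedVariationOn_muInt_Icc).congr hx
    · simpa [ht.1] using (hx ⟨ht.1.le, ht.2⟩).symm

/-- **Reduction of the impulsive delayed system to a conventional delayed ODE**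
(from the proof of Proposition 2.1): x is a trajectory associated with (μ,α) with
x(0) = ξ if and only if `x̃ = x − x̃₀`, where `x̃₀(t) = ∫_{[0,t]} G(s,α(s)) μ(ds)` for
t ∈ (0,T] and `x̃₀ = 0` on [−h,0], is an absolutely continuous solution (in integral
form) of the delayed ODE `x̃' (t) = f(t,{x̃(t−h_k) + x̃₀(t−h_k)},α(t))` with history ζ
and initial value ξ. -/
theorem trajectory_iff_shifted_solution
    (T : ℝ) (hT : 0 < T) (n m q N : ℕ) (hN : 1 ≤ N)
    (hdel : Fin (N + 1) → ℝ) (hdel0 : hdel 0 = 0) (hmono : StrictMono hdel)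
    (h : ℝ) (hh : h = hdel (Fin.last N))
    (K : Set (Fin m → ℝ)) (hKclosed : IsClosed K) (hKconvex : Convex ℝ K)
    (hKcone : ∀ w ∈ K, ∀ r : ℝ, 0 < r → r • w ∈ K)
    (A : ℝ → Set (Fin q → ℝ))
    (f : ℝ → Hist n N → (Fin q → ℝ) → Ev n)
    (G : ℝ → (Fin q → ℝ) → Matrix (Fin n) (Fin m) ℝ)
    (ζ : ℝ → Ev n)
    (hζmeas : AEStronglyMeasurable ζ (volume.restrict (Icc (-h) 0)))
    (hζbdd : ∃ C : ℝ, ∀ᵐ t ∂(volume.restrict (Icc (-h) 0)), ‖ζ t‖ ≤ C)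
    -- (H1)
    (H1 : MeasurableSet[LBprod q] {p : ℝ × (Fin q → ℝ) | p.2 ∈ A p.1})
    -- (H2)
    (H2meas : ∀ z : Hist n N, Measurable[LBprod q] (fun p : ℝ × (Fin q → ℝ) => f p.1 z p.2))
    (H2lip : ∀ M : ℝ, 0 < M → ∃ L : ℝ → ℝ, (∀ t, 0 ≤ L t) ∧
      IntegrableOn L (Icc 0 T) volume ∧
      ∀ᵐ t ∂(volume.restrict (Icc 0 T)), ∀ z y : Hist n N, ‖z‖ ≤ M → ‖y‖ ≤ M →
        ∀ a ∈ A t, ‖f t z a - f t y a‖ ≤ L t * ‖z - y‖)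
    -- (H3)
    (H3 : ∃ c : ℝ → ℝ, (∀ t, 0 ≤ c t) ∧ IntegrableOn c (Icc 0 T) volume ∧
      ∀ᵐ t ∂(volume.restrict (Icc 0 T)), ∀ z : Hist n N, ∀ a ∈ A t,
        ‖f t z a‖ ≤ c t * (1 + ‖z‖))
    -- the impulsive control and the initial condition
    (μ : Fin m → SignedMeasure ℝ) (α : ℝ → Fin q → ℝ)
    (hctrl : IsImpulsiveControl T K A G μ α)
    (ξ : Ev n)
    -- x̃₀(t) = ∫_{[0,t]} G(s,α(s)) μ(ds) on (0,T], = 0 on [−h,0]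
    (x0til : ℝ → Ev n)
    (hx0til : ∀ t : ℝ, x0til t =
      if 0 < t then muInt μ (fun s => G s (α s)) (Icc 0 t) else 0)
    (x : ℝ → Ev n) :
    (IsTrajectory T h hdel f G ζ μ α x ∧ x 0 = ξ) ↔
      ((fun t => x t - x0til t) 0 = ξ ∧
       (∀ᵐ t ∂(volume.restrict (Ico (-h) 0)), x t - x0til t = ζ t) ∧
       IntegrableOn
         (fun s => f s (histOf hdel (fun r => (x r - x0til r) + x0til r) s) (α s))
         (Icc 0 T) volume ∧
       (∀ t ∈ Icc 0 T, x t - x0til t = ξ +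
          ∫ s in (0:ℝ)..t,
            f s (histOf hdel (fun r => (x r - x0til r) + x0til r) s) (α s))) :=
  trajectory_iff_shifted_solution_general T n m q N hdel h K A f G ζ μ α hctrl ξ x0til hx0til x

end
end
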